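/- arXiv:2111.05697 — 2 statements merged into one kernel-verified Lean document; each statement's English description precedes it below -/
import Mathlib

section
/- Let T be a non-abelian finite simple group and let G = T^k with k ≥ 2. If x = (x₁, …, x_k) and y = (y₁, …, y_k) are distinct nontrivial elements of G with x₁ = 1, then the distance between x and y in the soluble graph of G is at most 2. -/
def solubleGraph (G : Type*) [Group G] (R : Subgroup G) :
    SimpleGraph {x : G // x ∉ R} :=
  SimpleGraph.fromRel (fun x y => IsSolvable (Subgroup.closure ({x.1, y.1} : Set G)))

/-! Both `x` and `y` commute with `z = (c, 1, …, 1)` for any `c ≠ 1` commuting with `y₁`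
(take `c = y₁` unless `y₁ = 1`), because `x₁ = 1`. Commuting elements generate an abelian
group, so `x — z — y` is a path in the soluble graph (or `x — y` directly if `z ∈ {x, y}`). -/

theorem Pi.mulSingle_commute_of_commute {I : Type*} [DecidableEq I] {f : I → Type*}
    [∀ i, Monoid (f i)] {x : ∀ i, f i} {i : I} {c : f i} (h : Commute c (x i)) :
    Commute (Pi.mulSingle i c) x := by
  ext j
  obtain rfl | hji := eq_or_ne j i
  · simpa using h.eq
  · simp [Pi.mulSingle_eq_of_ne hji]

theorem exists_ne_one_commute {G : Type*} [Monoid G] [Nontrivial G] (g : G) :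
    ∃ c ≠ (1 : G), Commute c g := by
  by_cases hg : g = 1
  · obtain ⟨c, hc⟩ := exists_ne (1 : G)
    exact ⟨c, hc, hg ▸ Commute.one_right c⟩
  · exact ⟨g, hg, Commute.refl g⟩

theorem isSolvable_closure_pair_of_commute {G : Type*} [Group G] {a b : G} (h : Commute a b) :
    Group.IsSolvable (Subgroup.closure ({a, b} : Set G)) := by
  have hcomm : ∀ p ∈ ({a, b} : Set G), ∀ q ∈ ({a, b} : Set G), p * q = q * p := by
    rintro p (rfl | rfl) q (rfl | rfl)
    exacts [rfl, h, h.symm, rfl]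
  have := Subgroup.isMulCommutative_closure hcomm
  exact Group.isSolvable_of_comm this.is_comm.comm

namespace solubleGraph

variable {G : Type*} [Group G]

theorem adj_of_commute {a b : G} (ha : a ≠ 1) (hb : b ≠ 1) (hab : a ≠ b) (h : Commute a b) :
    (solubleGraph G ⊥).Adj ⟨a, by simpa using ha⟩ ⟨b, by simpa using hb⟩ :=
  ⟨by simpa using hab, Or.inl (isSolvable_closure_pair_of_commute h)⟩

theorem exists_walk_length_le_two_of_commute {x y z : G} (hx : x ≠ 1) (hy : y ≠ 1) (hz : z ≠ 1)
    (hxy : x ≠ y) (hxz : Commute x z) (hzy : Commute z y) :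
    ∃ w : (solubleGraph G ⊥).Walk ⟨x, by simpa using hx⟩ ⟨y, by simpa using hy⟩,
      w.length ≤ 2 := by
  by_cases hc : Commute x y
  · exact ⟨(adj_of_commute hx hy hxy hc).toWalk, by simp⟩
  have hzx : x ≠ z := by rintro rfl; exact hc hzy
  have hzy' : z ≠ y := by rintro rfl; exact hc hxz
  exact ⟨.cons (adj_of_commute hx hz hzx hxz) (adj_of_commute hz hy hzy' hzy).toWalk, by simp⟩

end solubleGraph

theorem stmt8 {T : Type*} [Group T]
    (k : ℕ) (hk : 2 ≤ k) (x y : Fin k → T)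
    (hx : x ≠ 1) (hy : y ≠ 1) (hxy : x ≠ y) (hx1 : x ⟨0, by omega⟩ = 1) :
    ∃ w : (solubleGraph (Fin k → T) ⊥).Walk ⟨x, by simpa using hx⟩ ⟨y, by simpa using hy⟩,
      w.length ≤ 2 := by
  obtain ⟨j, hj⟩ := Function.ne_iff.mp hy
  have : Nontrivial T := nontrivial_of_ne _ _ hj
  obtain ⟨c, hc, hcy⟩ := exists_ne_one_commute (y ⟨0, by omega⟩)
  have hz : Pi.mulSingle ⟨0, by omega⟩ c ≠ (1 : Fin k → T) := by
    simpa [← Pi.mulSingle_one] using hc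
  have hxz : Commute x (Pi.mulSingle ⟨0, by omega⟩ c) :=
    (Pi.mulSingle_commute_of_commute (hx1 ▸ Commute.one_right c)).symm
  exact solubleGraph.exists_walk_length_le_two_of_commute hx hy hz hxy hxz
    (Pi.mulSingle_commute_of_commute hcy)
end

section
/- Let G = Sₙ be the symmetric group with n ≥ 5. Then for every nontrivial x ∈ G, the normalizer N_G(⟨x⟩) has even order; consequently every vertex of the soluble graph of Sₙ is adjacent to an involution, and the soluble graph of Sₙ has diameter at most 3. -/
/-
Every permutation is conjugate to its inverse. If `x ≠ 1` is an involution it lies in `N(⟨x⟩)`;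
otherwise an element `g` inverting `x` by conjugation has even order, because an odd-order `g`
lies in `⟨g²⟩`, which centralizes `x`. Hence `N(⟨x⟩)` has even order and, by Cauchy, contains an
involution; for an involution `x` a transposition other than `x` commuting with it serves instead
(this is where `n ≥ 4` is needed). An element `t` normalizing `⟨x⟩` generates with `x` the
solvable group `⟨t⟩⟨x⟩`, and two involutions generate a dihedral group, so the involutions form a
dominating clique of the soluble graph.
-/

open Subgroup
open scoped Pointwise

section Group

variable {G : Type*} [Group G]

theorem mem_normalizer_zpowers_iff {g x : G} :
    g ∈ normalizer (zpowers x : Set G) ↔ zpowers (g * x * g⁻¹) = zpowers x := by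
  rw [mem_normalizer_iff_map_conj_eq, MonoidHom.map_zpowers]
  rfl

theorem mem_normalizer_zpowers_of_commute {g x : G} (h : Commute g x) :
    g ∈ normalizer (zpowers x : Set G) := by
  rw [mem_normalizer_zpowers_iff, h.eq, mul_inv_cancel_right]

theorem mem_normalizer_zpowers_of_conj_eq_inv {g x : G} (h : g * x * g⁻¹ = x⁻¹) :
    g ∈ normalizer (zpowers x : Set G) := by
  rw [mem_normalizer_zpowers_iff, h, zpowers_inv]

theorem even_orderOf_of_conj_eq_inv {g x : G} (h : g * x * g⁻¹ = x⁻¹) (hx : x⁻¹ ≠ x) :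
    Even (orderOf g) := by
  by_contra hodd
  obtain ⟨k, hk⟩ := Nat.not_even_iff_odd.mp hodd
  have hsq : Commute (g ^ 2) x := by
    have h₁ : SemiconjBy g x x⁻¹ := mul_inv_eq_iff_eq_mul.mp h
    have h₂ : SemiconjBy g x⁻¹ x := by simpa using h₁.inv_right
    exact pow_two g ▸ h₂.mul_left h₁
  have hg : (g ^ 2) ^ (k + 1) = g := by
    rw [← pow_mul, show 2 * (k + 1) = orderOf g + 1 by omega, pow_succ, pow_orderOf_eq_one,
      one_mul]
  have hcomm : Commute g x := hg ▸ hsq.pow_left (k + 1)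
  exact hx (by rw [← h, hcomm.eq, mul_inv_cancel_right])

theorem even_card_normalizer_zpowers [Finite G] {x : G} (hx : x ≠ 1) (hreal : IsConj x x⁻¹) :
    Even (Nat.card (normalizer (zpowers x : Set G))) := by
  obtain ⟨g, hg⟩ := isConj_iff.mp hreal
  obtain ⟨h, hmem, heven⟩ : ∃ h ∈ normalizer (zpowers x : Set G), Even (orderOf h) := by
    by_cases hinv : x⁻¹ = x
    · refine ⟨x, le_normalizer (mem_zpowers x), ?_⟩
      rw [orderOf_eq_prime (by rw [pow_two, ← inv_eq_iff_mul_eq_one.mp hinv]) hx]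
      exact even_two
    · exact ⟨g, mem_normalizer_zpowers_of_conj_eq_inv hg, even_orderOf_of_conj_eq_inv hg hinv⟩
  exact even_iff_two_dvd.mpr (heven.two_dvd.trans (orderOf_dvd_natCard _ hmem))

theorem exists_orderOf_eq_two_mem_normalizer_zpowers [Finite G] {x : G} (hx : x ≠ 1)
    (hreal : IsConj x x⁻¹) : ∃ t ∈ normalizer (zpowers x : Set G), orderOf t = 2 := by
  have : Fact (Nat.Prime 2) := ⟨Nat.prime_two⟩
  obtain ⟨t, ht⟩ :=
    exists_prime_orderOf_dvd_card' 2 (even_card_normalizer_zpowers hx hreal).two_dvd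
  exact ⟨t, t.2, (orderOf_coe t).symm ▸ ht⟩

instance isSolvable_of_isMulCommutative [IsMulCommutative G] : Group.IsSolvable G :=
  Group.isSolvable_of_comm mul_comm'

theorem isSolvable_sup_of_le_normalizer {H N : Subgroup G} (hHN : H ≤ normalizer (N : Set G))
    [Group.IsSolvable H] [Group.IsSolvable N] : Group.IsSolvable ↥(H ⊔ N) := by
  have := normal_subgroupOf_sup_of_le_normalizer hHN
  rw [Group.isSolvable_iff_subgroup_quotient (N.subgroupOf (H ⊔ N))]
  refine ⟨Group.isSolvable_of_isSolvable_injective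
    (f := (subgroupOfEquivOfLe (le_sup_right : N ≤ H ⊔ N)).toMonoidHom) (MulEquiv.injective _), ?_⟩
  let f : H →* ↥(H ⊔ N) ⧸ N.subgroupOf (H ⊔ N) :=
    (QuotientGroup.mk' _).comp (inclusion le_sup_left)
  refine Group.isSolvable_of_surjective (f := f) ?_
  rintro ⟨l⟩
  obtain ⟨h, hh, n, hn, hl⟩ : (l : G) ∈ (H : Set G) * (N : Set G) := by
    rw [← coe_mul_of_left_le_normalizer_right H N hHN]; exact l.2
  refine ⟨⟨h, hh⟩, QuotientGroup.eq.mpr ?_⟩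
  simpa [mem_subgroupOf, ← hl, mul_assoc] using hn

theorem isSolvable_closure_pair_of_mem_normalizer {x t : G}
    (ht : t ∈ normalizer (zpowers x : Set G)) :
    Group.IsSolvable (closure ({x, t} : Set G)) := by
  rw [Set.insert_eq, Subgroup.closure_union, ← zpowers_eq_closure, ← zpowers_eq_closure, sup_comm]
  exact isSolvable_sup_of_le_normalizer (zpowers_le.mpr ht)

theorem isSolvable_closure_pair_of_sq_eq_one {a b : G} (ha : a ^ 2 = 1) (hb : b ^ 2 = 1) :
    Group.IsSolvable (closure ({a, b} : Set G)) := by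
  have hle : closure ({a, b} : Set G) ≤ closure {a * b, b} := by
    have hab : a * b ∈ closure ({a * b, b} : Set G) := subset_closure (by simp)
    have hb : b ∈ closure ({a * b, b} : Set G) := subset_closure (by simp)
    rw [closure_le, Set.insert_subset_iff, Set.singleton_subset_iff]
    exact ⟨by simpa using mul_mem hab (inv_mem hb), hb⟩
  have hconj : b * (a * b) * b⁻¹ = (a * b)⁻¹ := by
    have ha' : a⁻¹ = a := inv_eq_of_mul_eq_one_right (by rw [← sq, ha])
    have hb' : b⁻¹ = b := inv_eq_of_mul_eq_one_right (by rw [← sq, hb])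
    rw [mul_inv_rev, ha', hb', mul_assoc, mul_assoc, ← sq, hb, mul_one]
  have := isSolvable_closure_pair_of_mem_normalizer (mem_normalizer_zpowers_of_conj_eq_inv hconj)
  exact Group.isSolvable_of_isSolvable_injective (inclusion_injective hle)

end Group

namespace Equiv.Perm

variable {α : Type*} [DecidableEq α]

theorem isConj_self_inv [Fintype α] (σ : Perm α) : IsConj σ σ⁻¹ :=
  isConj_iff_cycleType_eq.mpr (cycleType_inv σ).symm

theorem commute_swap_of_swap_apply_eq {f : Perm α} {x y : α} (h : swap (f x) (f y) = swap x y) :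
    Commute f (swap x y) := by
  rw [swap_apply_apply] at h
  exact mul_inv_eq_iff_eq_mul.mp h

theorem exists_isSwap_ne_commute_of_sq_eq_one [Fintype α] (hα : 4 ≤ Fintype.card α)
    {σ : Perm α} (hσ : σ ^ 2 = 1) (hσ1 : σ ≠ 1) :
    ∃ τ : Perm α, τ.IsSwap ∧ τ ≠ σ ∧ Commute τ σ := by
  obtain ⟨a, ha⟩ : ∃ a, σ a ≠ a := by
    by_contra! h
    exact hσ1 (Equiv.ext h)
  by_cases hσs : σ = swap a (σ a)
  · have hcard : 1 < ({a, σ a}ᶜ : Finset α).card := by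
      rw [Finset.card_compl, Finset.card_pair ha.symm]
      omega
    obtain ⟨c, d, hc, hd, hcd⟩ := Finset.one_lt_card_iff.mp hcard
    simp only [Finset.mem_compl, Finset.mem_insert, Finset.mem_singleton, not_or] at hc hd
    refine ⟨swap c d, ⟨c, d, hcd, rfl⟩, fun h => ha ?_, ?_⟩
    · rw [← h, swap_apply_of_ne_of_ne (Ne.symm hc.1) (Ne.symm hd.1)]
    · rw [hσs]
      apply commute_swap_of_swap_apply_eq
      rw [swap_apply_of_ne_of_ne (Ne.symm hc.1) (Ne.symm hd.1),
        swap_apply_of_ne_of_ne (Ne.symm hc.2) (Ne.symm hd.2)]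
  · have hσσa : σ (σ a) = a := by rw [← Perm.mul_apply, ← sq, hσ, one_apply]
    refine ⟨swap a (σ a), ⟨a, σ a, ha.symm, rfl⟩, Ne.symm hσs, ?_⟩
    refine (commute_swap_of_swap_apply_eq ?_).symm
    rw [hσσa, swap_comm]

theorem exists_orderOf_eq_two_mem_normalizer_zpowers_ne [Fintype α] (hα : 4 ≤ Fintype.card α)
    {σ : Perm α} (hσ : σ ≠ 1) :
    ∃ τ ∈ normalizer (zpowers σ : Set (Perm α)), orderOf τ = 2 ∧ τ ≠ σ := by
  by_cases hσ2 : σ ^ 2 = 1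
  · obtain ⟨τ, hswap, hne, hcomm⟩ := exists_isSwap_ne_commute_of_sq_eq_one hα hσ2 hσ
    exact ⟨τ, mem_normalizer_zpowers_of_commute hcomm, hswap.orderOf, hne⟩
  · obtain ⟨τ, hmem, hτ⟩ := exists_orderOf_eq_two_mem_normalizer_zpowers hσ σ.isConj_self_inv
    refine ⟨τ, hmem, hτ, ?_⟩
    rintro rfl
    exact hσ2 (hτ ▸ pow_orderOf_eq_one τ)

end Equiv.Perm

theorem SimpleGraph.ediam_le_three_of_isClique_of_forall_exists_adj {V : Type*}
    {G : SimpleGraph V} {S : Set V} (hS : G.IsClique S) (hdom : ∀ v, ∃ s ∈ S, G.Adj v s) :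
    G.ediam ≤ 3 := by
  rw [ediam_le_iff]
  intro u v
  obtain ⟨s, hs, hus⟩ := hdom u
  obtain ⟨s', hs', hvs'⟩ := hdom v
  have hss' : G.edist s s' ≤ 1 :=
    edist_le_one_iff_adj_or_eq.mpr ((eq_or_ne s s').elim Or.inr fun hne => Or.inl (hS hs hs' hne))
  calc G.edist u v ≤ G.edist u s + G.edist s v := G.edist_triangle
    _ ≤ G.edist u s + (G.edist s s' + G.edist s' v) := by gcongr; exact G.edist_triangle
    _ ≤ 1 + (1 + 1) := by
        gcongr
        · exact (edist_eq_one_iff_adj.mpr hus).le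
        · exact (edist_eq_one_iff_adj.mpr hvs'.symm).le
    _ = 3 := by norm_num

section SolubleGraph

variable {G : Type*} [Group G] {R : Subgroup G} {x y : {x : G // x ∉ R}}

theorem solubleGraph_adj_of_mem_normalizer (hne : x ≠ y)
    (hy : y.1 ∈ normalizer (zpowers x.1 : Set G)) : (solubleGraph G R).Adj x y :=
  ⟨hne, Or.inl (isSolvable_closure_pair_of_mem_normalizer hy)⟩

theorem solubleGraph_adj_of_sq_eq_one (hne : x ≠ y) (hx : x.1 ^ 2 = 1) (hy : y.1 ^ 2 = 1) :
    (solubleGraph G R).Adj x y :=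
  ⟨hne, Or.inl (isSolvable_closure_pair_of_sq_eq_one hx hy)⟩

end SolubleGraph

theorem stmt11 (n : ℕ) (hn : 5 ≤ n) :
    (∀ x : Equiv.Perm (Fin n), x ≠ 1 →
        Even (Nat.card (Subgroup.normalizer (Subgroup.zpowers x : Set (Equiv.Perm (Fin n)))))) ∧
      (∀ x : {a : Equiv.Perm (Fin n) // a ∉ (⊥ : Subgroup (Equiv.Perm (Fin n)))},
        ∃ y, orderOf y.1 = 2 ∧ (solubleGraph (Equiv.Perm (Fin n)) ⊥).Adj x y) ∧
      (solubleGraph (Equiv.Perm (Fin n)) ⊥).ediam ≤ 3 := by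
  have hcard : 4 ≤ Fintype.card (Fin n) := by rw [Fintype.card_fin]; omega
  have adj_involution : ∀ x : {a : Equiv.Perm (Fin n) // a ∉ (⊥ : Subgroup _)},
      ∃ y, orderOf y.1 = 2 ∧ (solubleGraph (Equiv.Perm (Fin n)) ⊥).Adj x y := by
    rintro ⟨x, hx⟩
    obtain ⟨t, ht, ht2, htx⟩ :=
      Equiv.Perm.exists_orderOf_eq_two_mem_normalizer_zpowers_ne hcard (mt mem_bot.mpr hx)
    have ht1 : t ∉ (⊥ : Subgroup _) := fun h => by simp [mem_bot.mp h] at ht2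
    exact ⟨⟨t, ht1⟩, ht2, solubleGraph_adj_of_mem_normalizer
      (fun h => htx (congrArg Subtype.val h).symm) ht⟩
  refine ⟨fun x hx => even_card_normalizer_zpowers hx x.isConj_self_inv, adj_involution, ?_⟩
  refine SimpleGraph.ediam_le_three_of_isClique_of_forall_exists_adj
    (S := {v | orderOf v.1 = 2}) ?_ fun x => by simpa using adj_involution x
  intro u hu v hv huv
  exact solubleGraph_adj_of_sq_eq_one huv (hu ▸ pow_orderOf_eq_one u.1)
    (hv ▸ pow_orderOf_eq_one v.1)
end
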